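/- arXiv:2208.13578 — 5 statements merged into one kernel-verified Lean document; each statement's English description precedes it below -/
import Mathlib

section
/- Let p be a prime and a, b integers. If every complex root of the polynomial h(X) = X^4 + a*sqrt(p)*X^3 + b*X^2 + a*sqrt(p)*X + 1 has absolute value 1, then |a| ≤ 4/sqrt(p), b ≤ a^2*p/4 + 2, (p*a^2 - 4)/2 ≤ b, and 4*p*a^2 ≤ (b+2)^2. -/
/-!
Over `ℂ` the reciprocal quartic `z⁴ + c z³ + e z² + c z + 1` factors as
`(z² - w₁ z + 1)(z² - w₂ z + 1)` with `w₁ + w₂ = -c` and `w₁ w₂ = e - 2`. A root `z` of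
`z² - w z + 1` on the unit circle has `1 / z = conj z`, so `w = z + conj z = 2 Re z` is real with
`|w| ≤ 2`. With `c = a √p` and `e = b`, the upper bound on `b` is `(w₁ - w₂)² ≥ 0`, and the other
inequalities say that products of the nonnegative numbers `2 ± wᵢ` are nonnegative.
-/

open ComplexConjugate

theorem exists_real_abs_le_two_of_roots_norm_eq_one (w : ℂ)
    (h : ∀ z : ℂ, z ^ 2 - w * z + 1 = 0 → ‖z‖ = 1) :
    ∃ t : ℝ, |t| ≤ 2 ∧ w = t := by
  obtain ⟨d, hd⟩ := IsAlgClosed.exists_pow_nat_eq (w ^ 2 - 4) two_pos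
  set z : ℂ := (w + d) / 2
  have hz : z ^ 2 - w * z + 1 = 0 := by linear_combination hd / 4
  have hnorm : ‖z‖ = 1 := h z hz
  have hz0 : z ≠ 0 := norm_ne_zero_iff.mp (by simp [hnorm])
  have hconj : z * conj z = 1 := by
    rw [Complex.mul_conj, Complex.normSq_eq_norm_sq, hnorm]; norm_num
  have hw : w = z + conj z :=
    mul_right_cancel₀ hz0 (by linear_combination -hz - hconj)
  refine ⟨2 * z.re, ?_, by rw [hw, Complex.add_conj]⟩
  have hre : |z.re| ≤ 1 := hnorm ▸ Complex.abs_re_le_norm z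
  rw [abs_mul, abs_two]
  linarith

theorem exists_reciprocal_quartic_eq_mul (c e : ℂ) :
    ∃ w₁ w₂ : ℂ, w₁ + w₂ = -c ∧ w₁ * w₂ = e - 2 ∧
      ∀ z : ℂ, z ^ 4 + c * z ^ 3 + e * z ^ 2 + c * z + 1
        = (z ^ 2 - w₁ * z + 1) * (z ^ 2 - w₂ * z + 1) := by
  obtain ⟨d, hd⟩ := IsAlgClosed.exists_pow_nat_eq (c ^ 2 - 4 * (e - 2)) two_pos
  refine ⟨(-c + d) / 2, (-c - d) / 2, by ring, by linear_combination -hd / 4, fun z => ?_⟩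
  linear_combination z ^ 2 / 4 * hd

theorem reciprocal_quartic_coeff_bounds {t₁ t₂ : ℝ} (h₁ : |t₁| ≤ 2) (h₂ : |t₂| ≤ 2) :
    |t₁ + t₂| ≤ 4 ∧
    t₁ * t₂ + 2 ≤ (t₁ + t₂) ^ 2 / 4 + 2 ∧
    ((t₁ + t₂) ^ 2 - 4) / 2 ≤ t₁ * t₂ + 2 ∧
    4 * (t₁ + t₂) ^ 2 ≤ (t₁ * t₂ + 2 + 2) ^ 2 := by
  rw [abs_le] at h₁ h₂
  have hm₁ : 0 ≤ (2 - t₁) * (2 + t₁) := mul_nonneg (by linarith) (by linarith)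
  have hm₂ : 0 ≤ (2 - t₂) * (2 + t₂) := mul_nonneg (by linarith) (by linarith)
  have hminus : 0 ≤ (2 - t₁) * (2 - t₂) := mul_nonneg (by linarith) (by linarith)
  have hplus : 0 ≤ (2 + t₁) * (2 + t₂) := mul_nonneg (by linarith) (by linarith)
  refine ⟨abs_le.mpr ⟨by linarith, by linarith⟩, by nlinarith [sq_nonneg (t₁ - t₂)],
    by nlinarith, ?_⟩
  calc 4 * (t₁ + t₂) ^ 2
      ≤ 4 * (t₁ + t₂) ^ 2 + (2 - t₁) * (2 - t₂) * ((2 + t₁) * (2 + t₂)) :=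
        le_add_of_nonneg_right (mul_nonneg hminus hplus)
    _ = (t₁ * t₂ + 2 + 2) ^ 2 := by ring

theorem reciprocal_quartic_bounds_of_roots_norm_eq_one (c e : ℝ)
    (h : ∀ z : ℂ, z ^ 4 + c * z ^ 3 + e * z ^ 2 + c * z + 1 = 0 → ‖z‖ = 1) :
    |c| ≤ 4 ∧ e ≤ c ^ 2 / 4 + 2 ∧ (c ^ 2 - 4) / 2 ≤ e ∧ 4 * c ^ 2 ≤ (e + 2) ^ 2 := by
  obtain ⟨w₁, w₂, hsum, hprod, hfactor⟩ := exists_reciprocal_quartic_eq_mul c e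
  obtain ⟨t₁, ht₁, rfl⟩ := exists_real_abs_le_two_of_roots_norm_eq_one w₁
    fun z hz => h z (by rw [hfactor, hz, zero_mul])
  obtain ⟨t₂, ht₂, rfl⟩ := exists_real_abs_le_two_of_roots_norm_eq_one w₂
    fun z hz => h z (by rw [hfactor, hz, mul_zero])
  have hc : c = -(t₁ + t₂) := by
    exact_mod_cast (by linear_combination hsum : (c : ℂ) = -(t₁ + t₂))
  have he : e = t₁ * t₂ + 2 := by
    exact_mod_cast (by linear_combination -hprod : (e : ℂ) = t₁ * t₂ + 2)
  subst hc he
  simpa only [abs_neg, neg_sq] using reciprocal_quartic_coeff_bounds ht₁ ht₂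

/-- If all complex roots of `X^4 + a√p X^3 + b X^2 + a√p X + 1` lie on the unit
circle, then the stated integer inequalities hold. -/
theorem stmt_0 (p : ℕ) (hp : p.Prime) (a b : ℤ)
    (hroots : ∀ z : ℂ,
      z ^ 4 + (a : ℂ) * (Real.sqrt p : ℂ) * z ^ 3 + (b : ℂ) * z ^ 2
        + (a : ℂ) * (Real.sqrt p : ℂ) * z + 1 = 0 → ‖z‖ = 1) :
    |(a : ℝ)| ≤ 4 / Real.sqrt p ∧
    (b : ℝ) ≤ (a : ℝ) ^ 2 * p / 4 + 2 ∧
    ((p : ℝ) * (a : ℝ) ^ 2 - 4) / 2 ≤ (b : ℝ) ∧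
    4 * (p : ℝ) * (a : ℝ) ^ 2 ≤ ((b : ℝ) + 2) ^ 2 := by
  have hsqrt : 0 < Real.sqrt p := Real.sqrt_pos.mpr (by exact_mod_cast hp.pos)
  have hsq : ((a : ℝ) * Real.sqrt p) ^ 2 = (a : ℝ) ^ 2 * p := by
    rw [mul_pow, Real.sq_sqrt (Nat.cast_nonneg p)]
  obtain ⟨habs, hupper, hlower, hdisc⟩ :=
    reciprocal_quartic_bounds_of_roots_norm_eq_one ((a : ℝ) * Real.sqrt p) b
      (by push_cast; exact hroots)
  rw [hsq] at hupper hlower hdisc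
  refine ⟨?_, hupper, by linarith, by linarith⟩
  rwa [le_div_iff₀ hsqrt, ← abs_of_pos hsqrt, ← abs_mul]
end

section
/- Let p ≥ 7 be a prime and a, b integers such that all roots of h(X) = X^4 + a*sqrt(p)*X^3 + b*X^2 + a*sqrt(p)*X + 1 lie on the unit circle. Then a = 0 and b ∈ {-2, -1, 0, 1, 2}; equivalently, the polynomial Φ(x) = x^4 + p*a*x^3 + p*b*x^2 + p^2*a*x + p^2 is one of (x^2 - p)^2, (x^2 + p)^2, x^4 + p^2, x^4 - p*x^2 + p^2, x^4 + p*x^2 + p^2. -/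
/-!
Since `h` is palindromic, `h(z) = z² q(z + z⁻¹)` with `q(w) = w² + a√p w + (b - 2)`, and every
`w ∈ ℂ` is `z + z⁻¹` for some `z ≠ 0`. On the unit circle `z + z⁻¹ = 2 Re z ∈ [-2, 2]`, so both
roots of `q` are real and lie in `[-2, 2]`. This forces `4(b - 2) ≤ a²p` (real roots),
`2|a|√p ≤ b + 2` (`q(±2) ≥ 0`) and `a²p ≤ 16` (the vertex lies in `[-2, 2]`). For `a ≠ 0` these
leave only `p ∈ {8, 9, 12, 16}`, none of them prime; for `a = 0` they say `|b| ≤ 2`.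
-/

open Complex

theorem exists_add_inv_eq (w : ℂ) : ∃ z : ℂ, z ≠ 0 ∧ z + z⁻¹ = w := by
  obtain ⟨s, hs⟩ := IsAlgClosed.exists_eq_mul_self (w ^ 2 - 4)
  have hprod : (w + s) / 2 * ((w - s) / 2) = 1 := by linear_combination (1 / 4 : ℂ) * hs
  refine ⟨(w + s) / 2, left_ne_zero_of_mul_eq_one hprod, ?_⟩
  rw [inv_eq_of_mul_eq_one_right hprod]
  ring

theorem Complex.add_inv_eq_two_mul_re_of_norm_eq_one {z : ℂ} (hz : ‖z‖ = 1) :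
    z + z⁻¹ = (2 * z.re : ℝ) := by
  rw [inv_eq_conj hz, add_conj]

theorem palindromic_quartic_eq_zero {c d z : ℂ} (hz : z ≠ 0)
    (h : (z + z⁻¹) ^ 2 + c * (z + z⁻¹) + (d - 2) = 0) :
    z ^ 4 + c * z ^ 3 + d * z ^ 2 + c * z + 1 = 0 := by
  have hfactor : z ^ 4 + c * z ^ 3 + d * z ^ 2 + c * z + 1
      = z ^ 2 * ((z + z⁻¹) ^ 2 + c * (z + z⁻¹) + (d - 2)) := by
    field_simp
    ring
  rw [hfactor, h, mul_zero]

theorem quadratic_roots_mem_Icc_of_palindromic_roots_on_circle {c d : ℂ}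
    (hroots : ∀ z : ℂ, z ^ 4 + c * z ^ 3 + d * z ^ 2 + c * z + 1 = 0 → ‖z‖ = 1)
    {w : ℂ} (hw : w ^ 2 + c * w + (d - 2) = 0) : w.im = 0 ∧ |w.re| ≤ 2 := by
  obtain ⟨z, hz0, rfl⟩ := exists_add_inv_eq w
  have hz := hroots z (palindromic_quartic_eq_zero hz0 hw)
  rw [add_inv_eq_two_mul_re_of_norm_eq_one hz, ofReal_re, ofReal_im, abs_mul, abs_two]
  refine ⟨rfl, ?_⟩
  linarith [hz ▸ abs_re_le_norm z]

theorem discrim_nonneg_of_roots_real {c d : ℝ}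
    (hreal : ∀ w : ℂ, w ^ 2 + c * w + d = 0 → w.im = 0) : 0 ≤ c ^ 2 - 4 * d := by
  by_contra! hneg
  set u := Real.sqrt (-(c ^ 2 - 4 * d))
  have hu : 0 < u := Real.sqrt_pos.mpr (by linarith)
  have hu2 : (u : ℂ) ^ 2 = -(c ^ 2 - 4 * d) := by
    exact_mod_cast Real.sq_sqrt (by linarith : 0 ≤ -(c ^ 2 - 4 * d))
  have him := hreal ((-c + u * I) / 2)
    (by linear_combination (-1 / 4 : ℂ) * hu2 + (u ^ 2 / 4 : ℂ) * I_sq)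
  exact hu.ne' (by simpa using him)

theorem quadratic_constraints_of_roots_mem_Icc {c d : ℝ}
    (hroots : ∀ w : ℂ, w ^ 2 + c * w + d = 0 → w.im = 0 ∧ |w.re| ≤ 2) :
    0 ≤ c ^ 2 - 4 * d ∧ 0 ≤ 4 + 2 * c + d ∧ 0 ≤ 4 - 2 * c + d ∧ |c| ≤ 4 := by
  have hD := discrim_nonneg_of_roots_real fun w hw => (hroots w hw).1
  set t := Real.sqrt (c ^ 2 - 4 * d)
  have ht : t ^ 2 = c ^ 2 - 4 * d := Real.sq_sqrt hD
  have hbound : ∀ r : ℝ, r ^ 2 + c * r + d = 0 → |r| ≤ 2 := fun r hr => by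
    simpa using (hroots r (by exact_mod_cast hr)).2
  have h₁ := abs_le.mp (hbound ((-c + t) / 2) (by linear_combination ht / 4))
  have h₂ := abs_le.mp (hbound ((-c - t) / 2) (by linear_combination ht / 4))
  -- `4 ± 2c + d = (2 ± r₁)(2 ± r₂)` for the roots `r₁, r₂ = (-c ± t) / 2`
  refine ⟨hD, by nlinarith, by nlinarith, abs_le.mpr ⟨by linarith, by linarith⟩⟩

theorem eq_zero_of_prime_of_quadratic_constraints {p : ℕ} (hp : p.Prime) (hp7 : 7 ≤ p)
    {a b : ℤ} (hdisc : 4 * (b - 2) ≤ a ^ 2 * p) (hsq : 4 * (a ^ 2 * p) ≤ (b + 2) ^ 2)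
    (hb : 0 ≤ b + 2) (h16 : a ^ 2 * p ≤ 16) : a = 0 := by
  by_contra! ha
  have hp16 : p ≤ 16 := by zify; nlinarith [pow_pos (abs_pos.mpr ha) 2, sq_abs a]
  have ha2 : a ^ 2 = 1 := by
    obtain ⟨ha₁, ha₂⟩ : -1 ≤ a ∧ a ≤ 1 := by constructor <;> nlinarith
    interval_cases a <;> simp_all
  rw [ha2, one_mul] at hdisc hsq
  have hb4 : 4 ≤ b := by nlinarith
  have hb6 : b ≤ 6 := by omega
  have hp_cases : p = 8 ∨ p = 9 ∨ p = 12 ∨ p = 16 := by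
    interval_cases b <;> norm_num at hsq <;> omega
  rcases hp_cases with rfl | rfl | rfl | rfl <;> norm_num at hp

/-- For primes `p ≥ 7`, if all roots of `X^4 + a√p X^3 + b X^2 + a√p X + 1`
lie on the unit circle, then `a = 0` and `b ∈ {-2, -1, 0, 1, 2}`. -/
theorem stmt_2 (p : ℕ) (hp : p.Prime) (hp7 : 7 ≤ p) (a b : ℤ)
    (hroots : ∀ z : ℂ,
      z ^ 4 + (a : ℂ) * (Real.sqrt p : ℂ) * z ^ 3 + (b : ℂ) * z ^ 2
        + (a : ℂ) * (Real.sqrt p : ℂ) * z + 1 = 0 → ‖z‖ = 1) :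
    a = 0 ∧ (b = -2 ∨ b = -1 ∨ b = 0 ∨ b = 1 ∨ b = 2) := by
  set c : ℝ := a * Real.sqrt p
  have hc : c ^ 2 = a ^ 2 * p := by rw [mul_pow, Real.sq_sqrt p.cast_nonneg]
  obtain ⟨hdisc, hplus, hminus, hc4⟩ := quadratic_constraints_of_roots_mem_Icc (c := c)
    (d := b - 2) fun w hw =>
      quadratic_roots_mem_Icc_of_palindromic_roots_on_circle hroots (by simpa [c] using hw)
  have hdiscℤ : 4 * (b - 2) ≤ a ^ 2 * p := by
    exact_mod_cast (by linarith : (4 * (b - 2) : ℝ) ≤ a ^ 2 * p)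
  have hsqℤ : 4 * (a ^ 2 * p) ≤ (b + 2) ^ 2 := by
    exact_mod_cast (by nlinarith : (4 * (a ^ 2 * p) : ℝ) ≤ (b + 2) ^ 2)
  have hbℤ : 0 ≤ b + 2 := by exact_mod_cast (by linarith : (0 : ℝ) ≤ b + 2)
  have h16ℤ : a ^ 2 * p ≤ 16 := by
    exact_mod_cast (by nlinarith [abs_le.mp hc4] : (a ^ 2 * p : ℝ) ≤ 16)
  obtain rfl := eq_zero_of_prime_of_quadratic_constraints hp hp7 hdiscℤ hsqℤ hbℤ h16ℤ
  refine ⟨rfl, ?_⟩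
  rw [zero_pow two_ne_zero, zero_mul] at hdiscℤ
  omega
end

section
/- Let a, b be integers with |a| = 1 such that all roots of X^4 + a*sqrt(5)*X^3 + b*X^2 + a*sqrt(5)*X + 1 lie on the unit circle. Then b = 3. -/
/-!
The palindromic quartic `z⁴ + p z³ + q z² + p z + 1` factors over `ℂ` as
`(z² - w z + 1)(z² - w' z + 1)` with `w + w' = -p` and `w w' = q - 2`. A factor `z² - w z + 1`
with both roots on the unit circle has roots `ζ, ζ̄`, so `w = 2 Re ζ` is real with `|w| ≤ 2`.
Hence `(2 ± w)(2 ± w') ≥ 0` and `(w - w')² ≥ 0`, i.e. `2|p| ≤ q + 2` and `4(q - 2) ≤ p²`.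
For `p = ±√5` and integral `q = b` these read `2√5 - 2 ≤ b ≤ 13/4`, forcing `b = 3`.
-/

lemma Complex.exists_add_eq_and_mul_eq (s t : ℂ) : ∃ w w' : ℂ, w + w' = s ∧ w * w' = t := by
  obtain ⟨d, hd⟩ := IsAlgClosed.exists_pow_nat_eq (s ^ 2 - 4 * t) two_pos
  exact ⟨(s + d) / 2, (s - d) / 2, by ring, by linear_combination (-1 / 4 : ℂ) * hd⟩

lemma palindromic_quartic_eq_mul {R : Type*} [CommRing R] {p q w w' : R}
    (hsum : w + w' = -p) (hprod : w * w' = q - 2) (z : R) :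
    z ^ 4 + p * z ^ 3 + q * z ^ 2 + p * z + 1 = (z ^ 2 - w * z + 1) * (z ^ 2 - w' * z + 1) := by
  linear_combination (z ^ 3 + z) * hsum - z ^ 2 * hprod

lemma Complex.exists_ofReal_abs_le_two_of_norm_roots_eq_one {v : ℂ}
    (h : ∀ z : ℂ, z ^ 2 - v * z + 1 = 0 → ‖z‖ = 1) : ∃ x : ℝ, v = x ∧ |x| ≤ 2 := by
  obtain ⟨ζ, ζ', hsum, hprod⟩ := Complex.exists_add_eq_and_mul_eq v 1
  have hζ : ‖ζ‖ = 1 := h ζ (by linear_combination ζ * hsum - hprod)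
  have hζ' : ζ' = starRingEnd ℂ ζ := by
    rw [eq_inv_of_mul_eq_one_right hprod, Complex.inv_def, Complex.normSq_eq_norm_sq, hζ]
    simp
  refine ⟨2 * ζ.re, ?_, ?_⟩
  · rw [← hsum, hζ', Complex.add_conj]
  · rw [abs_mul, abs_two]
    linarith [Complex.abs_re_le_norm ζ]

lemma palindromic_quartic_coeff_bounds {p q : ℝ}
    (h : ∀ z : ℂ, z ^ 4 + p * z ^ 3 + q * z ^ 2 + p * z + 1 = 0 → ‖z‖ = 1) :
    2 * |p| ≤ q + 2 ∧ 4 * (q - 2) ≤ p ^ 2 := by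
  obtain ⟨w, w', hsum, hprod⟩ := Complex.exists_add_eq_and_mul_eq (-p) (q - 2)
  have hfactor := palindromic_quartic_eq_mul hsum hprod
  obtain ⟨x, rfl, hx⟩ := Complex.exists_ofReal_abs_le_two_of_norm_roots_eq_one (v := w)
    fun z hz => h z (by rw [hfactor, hz, zero_mul])
  obtain ⟨y, rfl, hy⟩ := Complex.exists_ofReal_abs_le_two_of_norm_roots_eq_one (v := w')
    fun z hz => h z (by rw [hfactor, hz, mul_zero])
  have hsum' : x + y = -p := by exact_mod_cast hsum
  have hprod' : x * y = q - 2 := by exact_mod_cast hprod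
  obtain ⟨hx₁, hx₂⟩ := abs_le.mp hx
  obtain ⟨hy₁, hy₂⟩ := abs_le.mp hy
  constructor
  · rcases abs_cases p with ⟨hp, -⟩ | ⟨hp, -⟩ <;> rw [hp]
    · nlinarith [mul_nonneg (by linarith : (0 : ℝ) ≤ 2 + x) (by linarith : (0 : ℝ) ≤ 2 + y)]
    · nlinarith [mul_nonneg (by linarith : (0 : ℝ) ≤ 2 - x) (by linarith : (0 : ℝ) ≤ 2 - y)]
  · nlinarith [sq_nonneg (x - y)]

/-- If `|a| = 1` and all roots of `X^4 + a√5 X^3 + b X^2 + a√5 X + 1`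
lie on the unit circle, then `b = 3`. -/
theorem stmt_3 (a b : ℤ) (ha : |a| = 1)
    (hroots : ∀ z : ℂ,
      z ^ 4 + (a : ℂ) * (Real.sqrt 5 : ℂ) * z ^ 3 + (b : ℂ) * z ^ 2
        + (a : ℂ) * (Real.sqrt 5 : ℂ) * z + 1 = 0 → ‖z‖ = 1) :
    b = 3 := by
  obtain ⟨hlower, hupper⟩ := palindromic_quartic_coeff_bounds (p := a * Real.sqrt 5) (q := b)
    (by push_cast; exact hroots)
  have ha' : |(a : ℝ)| = 1 := by exact_mod_cast ha
  have hsqrt5 : Real.sqrt 5 ^ 2 = 5 := Real.sq_sqrt (by norm_num)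
  have htwo_lt_sqrt5 : 2 < Real.sqrt 5 := by nlinarith [Real.sqrt_nonneg 5]
  rw [abs_mul, ha', one_mul, abs_of_nonneg (Real.sqrt_nonneg 5)] at hlower
  have hp_sq : ((a : ℝ) * Real.sqrt 5) ^ 2 = 5 := by
    rw [mul_pow, ← sq_abs (a : ℝ), ha', hsqrt5, one_pow, one_mul]
  have hb_gt : (2 : ℤ) < b := by exact_mod_cast (by linarith : (2 : ℝ) < b)
  have hb_lt : b < 4 := by exact_mod_cast (by linarith : (b : ℝ) < 4)
  omega
end

section
/- Define (p_f) by 1/(x^2 + sqrt(2)·x + 1)^2 = Σ_{f≥0} p_f x^f in ℝ[[x]]. Then p_f = (-1)^{f/4} if f ≡ 0 (mod 4); p_f = -(sqrt(2)/2)·(-1)^{(f-1)/4}·(f+3) if f ≡ 1 (mod 4); p_f = (-1)^{(f-2)/4}·(f+2) if f ≡ 2 (mod 4); and p_f = -(sqrt(2)/2)·(-1)^{(f-3)/4}·(f+1) if f ≡ 3 (mod 4). -/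
/-!
Since `(X² + √2 X + 1)² = X⁴ + 2√2 X³ + 4 X² + 2√2 X + 1`, it suffices to check that the proposed
coefficients `p` satisfy `p n + 2√2 p (n+1) + 4 p (n+2) + 2√2 p (n+3) + p (n+4) = 0` and start
with the right four values `1, -2√2, 4, -2√2`. On each residue class `4k + r` the closed form is
`(-1)^k` times a polynomial in `k` of degree at most one, so the recurrence reduces to four
identities in `k` and `√2 * √2 = 2`.
-/

open PowerSeries

theorem coeff_mk_mul_sq_X_sq_add_C_mul_X_add_one {R : Type*} [CommRing R] (a : ℕ → R) (s : R)
    (n : ℕ) :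
    coeff n (mk a * (X ^ 2 + C s * X + 1) ^ 2) =
      (if 4 ≤ n then a (n - 4) else 0) + 2 * s * (if 3 ≤ n then a (n - 3) else 0)
        + (2 + s ^ 2) * (if 2 ≤ n then a (n - 2) else 0)
        + 2 * s * (if 1 ≤ n then a (n - 1) else 0) + a n := by
  have hexpand : mk a * (X ^ 2 + C s * X + 1) ^ 2 =
      mk a * X ^ 4 + C (2 * s) * (mk a * X ^ 3) + C (2 + s ^ 2) * (mk a * X ^ 2)
        + C (2 * s) * (mk a * X ^ 1) + mk a := by
    simp only [map_mul, map_add, map_pow, map_ofNat]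
    ring
  rw [hexpand]
  simp only [map_add (coeff n), coeff_C_mul, coeff_mul_X_pow', coeff_mk]

noncomputable def invSqCoeff (n : ℕ) : ℝ :=
  if n % 4 = 0 then (-1 : ℝ) ^ (n / 4)
  else if n % 4 = 1 then -(√2 / 2) * (-1 : ℝ) ^ ((n - 1) / 4) * (n + 3)
  else if n % 4 = 2 then (-1 : ℝ) ^ ((n - 2) / 4) * (n + 2)
  else -(√2 / 2) * (-1 : ℝ) ^ ((n - 3) / 4) * (n + 1)

theorem invSqCoeff_four_mul (k : ℕ) : invSqCoeff (4 * k) = (-1) ^ k := by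
  rw [invSqCoeff, if_pos (by omega), Nat.mul_div_cancel_left k four_pos]

theorem invSqCoeff_four_mul_add_one (k : ℕ) :
    invSqCoeff (4 * k + 1) = -(√2 / 2) * (-1) ^ k * (4 * k + 4) := by
  rw [invSqCoeff, if_neg (by omega), if_pos (by omega), show (4 * k + 1 - 1) / 4 = k by omega]
  push_cast
  ring

theorem invSqCoeff_four_mul_add_two (k : ℕ) :
    invSqCoeff (4 * k + 2) = (-1) ^ k * (4 * k + 4) := by
  rw [invSqCoeff, if_neg (by omega), if_neg (by omega), if_pos (by omega),
    show (4 * k + 2 - 2) / 4 = k by omega]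
  push_cast
  ring

theorem invSqCoeff_four_mul_add_three (k : ℕ) :
    invSqCoeff (4 * k + 3) = -(√2 / 2) * (-1) ^ k * (4 * k + 4) := by
  rw [invSqCoeff, if_neg (by omega), if_neg (by omega), if_neg (by omega),
    show (4 * k + 3 - 3) / 4 = k by omega]
  push_cast
  ring

theorem invSqCoeff_recurrence (n : ℕ) :
    invSqCoeff n + 2 * √2 * invSqCoeff (n + 1) + 4 * invSqCoeff (n + 2)
      + 2 * √2 * invSqCoeff (n + 3) + invSqCoeff (n + 4) = 0 := by
  obtain ⟨k, r, hr, rfl⟩ : ∃ k r, r < 4 ∧ n = 4 * k + r :=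
    ⟨n / 4, n % 4, Nat.mod_lt _ four_pos, (Nat.div_add_mod n 4).symm⟩
  have hshift (j : ℕ) : 4 * k + j + 4 = 4 * (k + 1) + j := by ring
  have hshift' : 4 * k + 4 = 4 * (k + 1) := by ring
  interval_cases r <;>
    simp only [add_zero, add_assoc, Nat.reduceAdd, hshift, hshift',
      invSqCoeff_four_mul, invSqCoeff_four_mul_add_one, invSqCoeff_four_mul_add_two,
      invSqCoeff_four_mul_add_three, pow_succ] <;>
    grind [Real.mul_self_sqrt zero_le_two]

theorem mk_invSqCoeff_mul : mk invSqCoeff * (X ^ 2 + C √2 * X + 1) ^ 2 = 1 := by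
  ext n
  rw [coeff_mk_mul_sq_X_sq_add_C_mul_X_add_one, coeff_one, Real.sq_sqrt zero_le_two]
  rcases lt_or_ge n 4 with hn | hn
  · interval_cases n <;> norm_num [invSqCoeff] <;> grind [Real.mul_self_sqrt zero_le_two]
  · obtain ⟨m, rfl⟩ := Nat.exists_eq_add_of_le' hn
    rw [Nat.add_sub_cancel, show m + 4 - 3 = m + 1 by omega, show m + 4 - 2 = m + 2 by omega,
      show m + 4 - 1 = m + 3 by omega]
    norm_num
    linarith [invSqCoeff_recurrence m]

/-- Coefficients of `1/(x^2 + √2 x + 1)^2` in `ℝ⟦x⟧`. -/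
theorem stmt_9 (f : ℕ) :
    PowerSeries.coeff (R := ℝ) f
      (((PowerSeries.X ^ 2 + PowerSeries.C (R := ℝ) (Real.sqrt 2) * PowerSeries.X + 1 :
          PowerSeries ℝ) ^ 2)⁻¹)
      = if f % 4 = 0 then (-1 : ℝ) ^ (f / 4)
        else if f % 4 = 1 then -(Real.sqrt 2 / 2) * (-1 : ℝ) ^ ((f - 1) / 4) * (f + 3)
        else if f % 4 = 2 then (-1 : ℝ) ^ ((f - 2) / 4) * (f + 2)
        else -(Real.sqrt 2 / 2) * (-1 : ℝ) ^ ((f - 3) / 4) * (f + 1) := by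
  have hconst : constantCoeff ((X ^ 2 + C √2 * X + 1 : ℝ⟦X⟧) ^ 2) ≠ 0 := by simp
  rw [← (eq_inv_iff_mul_eq_one hconst).mpr mk_invSqCoeff_mul, coeff_mk]
  rfl
end

section
/- For every real x ≥ 300, (7/160)·x^{3/2} > (23/(48π))·(4·sqrt(x)·log(4x) + sqrt(x)). -/
/-- Analytic estimate: for `x ≥ 300`,
`(7/160) x^{3/2} > (23/(48π)) (4√x log(4x) + √x)`. -/
theorem stmt_18 (x : ℝ) (hx : 300 ≤ x) :
    (23 / (48 * Real.pi)) * (4 * Real.sqrt x * Real.log (4 * x) + Real.sqrt x)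
      < (7 / 160) * x ^ ((3 : ℝ) / 2) := by
  have hx0 : (0:ℝ) < x := by linarith
  have hs : 0 < Real.sqrt x := Real.sqrt_pos.mpr hx0
  have hpi : (3:ℝ) < Real.pi := Real.pi_gt_three
  -- bound log 1200 < 8
  have hexp : (1200:ℝ) < Real.exp 8 := by
    have h1 : (2.7182818283:ℝ) ^ (8:ℕ) ≤ Real.exp 1 ^ (8:ℕ) :=
      pow_le_pow_left₀ (by norm_num) (le_of_lt Real.exp_one_gt_d9) 8
    have h2 : Real.exp 1 ^ (8:ℕ) = Real.exp 8 := by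
      rw [← Real.exp_nat_mul]; norm_num
    nlinarith [h1, h2]
  have hlog1200 : Real.log 1200 < 8 := (Real.log_lt_iff_lt_exp (by norm_num)).mpr hexp
  -- log (4x) ≤ log 1200 + (x/300 - 1)
  have hlogdiv : Real.log (4 * x) - Real.log 1200 ≤ x / 300 - 1 := by
    have h1 : Real.log (4 * x / 1200) ≤ 4 * x / 1200 - 1 :=
      Real.log_le_sub_one_of_pos (by positivity)
    rw [Real.log_div (by positivity) (by norm_num)] at h1
    linarith
  have hlog : Real.log (4 * x) < 7 + x / 300 := by linarith
  have hlogpos : 0 < Real.log (4 * x) := Real.log_pos (by linarith)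
  -- key scalar inequality
  have key : (23 / (48 * Real.pi)) * (4 * Real.log (4 * x) + 1) < (7 / 160) * x := by
    have hc : 23 / (48 * Real.pi) < 23 / 144 := by
      apply div_lt_div_of_pos_left (by norm_num) (by norm_num) (by linarith)
    have hposfac : 0 < 4 * Real.log (4 * x) + 1 := by linarith
    have h1 : (23 / (48 * Real.pi)) * (4 * Real.log (4 * x) + 1)
        < (23 / 144) * (4 * Real.log (4 * x) + 1) :=
      mul_lt_mul_of_pos_right hc hposfac
    nlinarith [hlog, hx]
  -- multiply by sqrt x
  have hrpow : x ^ ((3:ℝ)/2) = x * Real.sqrt x := by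
    rw [show (3:ℝ)/2 = 1 + 1/2 by ring, Real.rpow_add hx0, Real.rpow_one,
      ← Real.sqrt_eq_rpow]
  rw [hrpow]
  have := mul_lt_mul_of_pos_right key hs
  nlinarith [this, hs]
end
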